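/- arXiv:1401.6061 — 2 statements merged into one kernel-verified Lean document; each statement's English description precedes it below -/
import Mathlib

section
/- Let 0 < κ ≤ ℵ0 be a cardinal number. There is a set A_κ ⊆ ωω such that the game GS_ω(A_κ,n) is undetermined for every n with 0 < n < κ, while ONE has a strategy σ in GS_ω(A_κ,ℵ0) such that in every play (f_n : n < ω) in which ONE follows σ, the set of boards ξ < ω for which (f_n(ξ) : n < ω) ∉ A_κ has cardinality less than κ (hence ONE has a winning strategy in GS_ω(A_κ,κ)). -/
open Cardinal Set

namespace GamePaper

universe u

/-! ### Gale–Stewart style games.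
A play is a sequence `p : ℕ → M`; player ONE (resp. White) moves at even indices,
player TWO (resp. Black) at odd indices.  A strategy for a player is a function
assigning to the finite sequence of the opponent's prior moves the player's next move. -/

/-- ONE's moves in the play `p` are obtained from the strategy `σ` applied to the
list of TWO's prior moves. -/
def OneFollows {M : Type*} (σ : List M → M) (p : ℕ → M) : Prop :=
  ∀ n : ℕ, p (2 * n) = σ (List.ofFn fun i : Fin n => p (2 * (i : ℕ) + 1))

/-- TWO's moves in the play `p` are obtained from the strategy `σ` applied to the
list of ONE's prior moves. -/
def TwoFollows {M : Type*} (σ : List M → M) (p : ℕ → M) : Prop :=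
  ∀ n : ℕ, p (2 * n + 1) = σ (List.ofFn fun i : Fin (n + 1) => p (2 * (i : ℕ)))

/-- ONE has a winning strategy in the Gale–Stewart game `GS_Λ(A)`. -/
def OneWinsGS {Λ : Type*} (A : Set (ℕ → Λ)) : Prop :=
  ∃ σ : List Λ → Λ, ∀ p : ℕ → Λ, OneFollows σ p → p ∈ A

/-- TWO has a winning strategy in the Gale–Stewart game `GS_Λ(A)`. -/
def TwoWinsGS {Λ : Type*} (A : Set (ℕ → Λ)) : Prop :=
  ∃ σ : List Λ → Λ, ∀ p : ℕ → Λ, TwoFollows σ p → p ∉ A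

/-- ONE has a winning strategy in the multiboard game `GS_Λ(A, K)`:
moves are functions `K → Λ`, and ONE wins a play if on some board `ξ` the induced
play belongs to `A`. -/
def OneWinsGSBoards (Λ K : Type*) (A : Set (ℕ → Λ)) : Prop :=
  ∃ σ : List (K → Λ) → K → Λ, ∀ q : ℕ → K → Λ, OneFollows σ q →
    ∃ ξ : K, (fun n => q n ξ) ∈ A

/-- TWO has a winning strategy in the multiboard game `GS_Λ(A, K)`. -/
def TwoWinsGSBoards (Λ K : Type*) (A : Set (ℕ → Λ)) : Prop :=
  ∃ σ : List (K → Λ) → K → Λ, ∀ q : ℕ → K → Λ, TwoFollows σ q →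
    ∀ ξ : K, (fun n => q n ξ) ∉ A

/-- The multiboard Gale–Stewart game `GS_Λ(A, K)` is determined. -/
def GSBoardsDetermined (Λ K : Type*) (A : Set (ℕ → Λ)) : Prop :=
  OneWinsGSBoards Λ K A ∨ TwoWinsGSBoards Λ K A

/-- `D(λ, κ)` : every multiboard Gale–Stewart game on `κ` boards with moves in `λ`
is determined. -/
def DProp (Λ K : Type*) : Prop :=
  ∀ A : Set (ℕ → Λ), GSBoardsDetermined Λ K A

/-! ### Laver games -/

/-- ONE wins the play `q` of the Laver game `LG(Λ, K)`. -/
def LaverWin (Λ K : Type*) (q : ℕ → K → Λ) : Prop :=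
  ∀ S : Set (ℕ → Λ), ¬ TwoWinsGS S → ∃ ξ : K, (fun n => q n ξ) ∈ S

/-- `L(λ, κ)` : ONE has a winning strategy in the Laver game `LG(Λ, K)`. -/
def OneWinsLG (Λ K : Type*) : Prop :=
  ∃ σ : List (K → Λ) → K → Λ, ∀ q : ℕ → K → Λ, OneFollows σ q → LaverWin Λ K q

/-- TWO has a winning strategy in the Laver game `LG(Λ, K)`. -/
def TwoWinsLG (Λ K : Type*) : Prop :=
  ∃ σ : List (K → Λ) → K → Λ, ∀ q : ℕ → K → Λ, TwoFollows σ q → ¬ LaverWin Λ K q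

/-! ### Ulam's cut-and-choose games `UG(λ, κ)`.
White first chooses `f 0 : K → Λ`; thereafter Black chooses `(ξ (2n), f (2n+1))` and
White responds with `(ξ (2n+1), f (2n+2))`.  White wins iff for some `α : K`,
`f n α = ξ n` for all `n`. -/

/-- A strategy for White in `UG(Λ, K)`: a first move, and a response to each finite
sequence of Black's prior moves. -/
structure UGWhiteStrategy (Λ K : Type*) where
  first : K → Λ
  move : List (Λ × (K → Λ)) → Λ × (K → Λ)

/-- White's moves in the play `(ξ, f)` of `UG(Λ, K)` follow the strategy `σ`. -/
def UGWhiteFollows {Λ K : Type*} (σ : UGWhiteStrategy Λ K) (ξ : ℕ → Λ) (f : ℕ → K → Λ) :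
    Prop :=
  f 0 = σ.first ∧
  ∀ n : ℕ, (ξ (2 * n + 1), f (2 * n + 2)) =
    σ.move (List.ofFn fun i : Fin (n + 1) => (ξ (2 * (i : ℕ)), f (2 * (i : ℕ) + 1)))

/-- `U(λ, κ)` : White has a winning strategy in the cut-and-choose game `UG(Λ, K)`. -/
def WhiteWinsUG (Λ K : Type*) : Prop :=
  ∃ σ : UGWhiteStrategy Λ K, ∀ (ξ : ℕ → Λ) (f : ℕ → K → Λ),
    UGWhiteFollows σ ξ f → ∃ α : K, ∀ n : ℕ, f n α = ξ n

/-! ### Ideals and the game `G(J)` -/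

/-- `J` is an ideal of subsets: nonempty, closed under binary unions and subsets. -/
def IsIdeal {S : Type*} (J : Set (Set S)) : Prop :=
  J.Nonempty ∧ (∀ A B : Set S, A ∈ J → B ∈ J → A ∪ B ∈ J) ∧
    ∀ A B : Set S, B ∈ J → A ⊆ B → A ∈ J

/-- `J` is atomless: every `J`-positive set splits into two disjoint `J`-positive sets. -/
def IsAtomless {S : Type*} (J : Set (Set S)) : Prop :=
  ∀ X : Set S, X ∉ J → ∃ A B : Set S, A ∪ B = X ∧ Disjoint A B ∧ A ∉ J ∧ B ∉ J

/-- Legality of White's `n`-th move in the game `G(J)` (White plays `W n`,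
Black plays `B n`). -/
def GJWhiteLegal {S : Type*} (J : Set (Set S)) (W B : ℕ → Set S) : ℕ → Prop
  | 0 => W 0 ∉ J
  | n + 1 => W (n + 1) ∉ J ∧ W (n + 1) ⊆ B n

/-- Legality of Black's `n`-th move in the game `G(J)`. -/
def GJBlackLegal {S : Type*} (J : Set (Set S)) (W B : ℕ → Set S) (n : ℕ) : Prop :=
  B n ∉ J ∧ B n ⊆ W n

/-- Black has a winning strategy in the game `G(J)`: a strategy `τ` such that in any
play in which Black follows `τ`, Black's moves are legal as long as White's have been,
and if White always moves legally then `⋂ n, B n` is nonempty. -/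
def BlackWinsGJ {S : Type*} (J : Set (Set S)) : Prop :=
  ∃ τ : List (Set S) → Set S,
    ∀ W B : ℕ → Set S,
      (∀ n : ℕ, B n = τ (List.ofFn fun i : Fin (n + 1) => W (i : ℕ))) →
      (∀ n : ℕ, (∀ k ≤ n, GJWhiteLegal J W B k) → GJBlackLegal J W B n) ∧
      ((∀ n : ℕ, GJWhiteLegal J W B n) → (⋂ n, B n).Nonempty)

/-- The ideal `J` on `K` witnesses `I(λ, κ)`: it is a proper free ideal, `λ⁺`-complete,
every positive set has a partition into `λ` many disjoint positive sets, and there is a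
dense family in `J⁺` closed under countable descending intersections (nonempty). -/
def IdealWitness (Λ K : Type*) (J : Set (Set K)) : Prop :=
  IsIdeal J ∧ J ≠ Set.univ ∧ ⋃₀ J = Set.univ ∧
  (∀ A : Λ → Set K, (∀ i, A i ∈ J) → (⋃ i, A i) ∈ J) ∧
  (∀ X : Set K, X ∉ J → ∃ P : Λ → Set K, (⋃ i, P i) = X ∧
      (∀ i j : Λ, i ≠ j → Disjoint (P i) (P j)) ∧ ∀ i, P i ∉ J) ∧
  ∃ F : Set (Set K), (∀ Y ∈ F, Y ∉ J) ∧ (∀ X : Set K, X ∉ J → ∃ Y ∈ F, Y ⊆ X) ∧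
    ∀ Xs : ℕ → Set K, (∀ n, Xs n ∈ F) → (∀ n, Xs (n + 1) ⊆ Xs n) → (⋂ n, Xs n).Nonempty

/-- `I(λ, κ)` : some ideal on `K` witnesses the above. -/
def IProp (Λ K : Type*) : Prop := ∃ J : Set (Set K), IdealWitness Λ K J

/-! ### The Banach–Mazur game and box products -/

/-- Legality of White's `n`-th move in the Banach–Mazur game (White plays the sets of
even index of the play `p`). -/
def BMWhiteLegal {X : Type*} [TopologicalSpace X] (p : ℕ → Set X) : ℕ → Prop
  | 0 => IsOpen (p 0) ∧ (p 0).Nonempty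
  | n + 1 => IsOpen (p (2 * n + 2)) ∧ (p (2 * n + 2)).Nonempty ∧ p (2 * n + 2) ⊆ p (2 * n + 1)

/-- Legality of Black's `n`-th move in the Banach–Mazur game. -/
def BMBlackLegal {X : Type*} [TopologicalSpace X] (p : ℕ → Set X) (n : ℕ) : Prop :=
  IsOpen (p (2 * n + 1)) ∧ (p (2 * n + 1)).Nonempty ∧ p (2 * n + 1) ⊆ p (2 * n)

/-- Black has a winning strategy in the Banach–Mazur game `BM(X)`: a strategy `τ` such
that in any play where Black follows `τ`, Black's moves are legal as long as White's
have been, and if White always moves legally then the intersection of the play is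
nonempty. -/
def BlackWinsBM (X : Type*) [TopologicalSpace X] : Prop :=
  ∃ τ : List (Set X) → Set X,
    ∀ p : ℕ → Set X,
      (∀ n : ℕ, p (2 * n + 1) = τ (List.ofFn fun i : Fin (n + 1) => p (2 * (i : ℕ)))) →
      (∀ n : ℕ, (∀ k ≤ n, BMWhiteLegal p k) → BMBlackLegal p n) ∧
      ((∀ n : ℕ, BMWhiteLegal p n) → (⋂ n, p n).Nonempty)

/-- The box product topology on `ι → X`: generated by boxes `∏ i, U i` with all
`U i` open. -/
def boxTopology (ι X : Type*) [TopologicalSpace X] : TopologicalSpace (ι → X) :=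
  TopologicalSpace.generateFrom
    {S : Set (ι → X) | ∃ U : ι → Set X, (∀ i, IsOpen (U i)) ∧ S = Set.pi Set.univ U}

/-- `𝓑` is a π-base for `X`: a family of nonempty open sets such that every nonempty
open set contains a member of the family. -/
def IsPiBase (X : Type*) [TopologicalSpace X] (𝓑 : Set (Set X)) : Prop :=
  (∀ V ∈ 𝓑, IsOpen V ∧ V.Nonempty) ∧
    ∀ U : Set X, IsOpen U → U.Nonempty → ∃ V ∈ 𝓑, V ⊆ U

/-! ### Interlaced sets -/

/-- `A` and `B` are interlaced: both are infinite and for some `k` the increasing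
enumerations of `A \ k` and `B \ k` satisfy `a₀ < b₀ < a₁ < b₁ < ⋯`. -/
def Interlaced (A B : Set ℕ) : Prop :=
  A.Infinite ∧ B.Infinite ∧ ∃ k : ℕ, ∀ n : ℕ,
    Nat.nth (fun m => m ∈ A ∧ k ≤ m) n < Nat.nth (fun m => m ∈ B ∧ k ≤ m) n ∧
    Nat.nth (fun m => m ∈ B ∧ k ≤ m) n < Nat.nth (fun m => m ∈ A ∧ k ≤ m) (n + 1)

/-- `B(x) = {x(2n) + x(2n+1) : n < ω, x(2n) > 0}`. -/
def Bx (x : ℕ → ℕ) : Set ℕ :=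
  {m | ∃ n : ℕ, 0 < x (2 * n) ∧ m = x (2 * n) + x (2 * n + 1)}

/-- `Y(𝓑) = {x ∈ ωω : B(x) ∉ 𝓑}`. -/
def YFam (𝓑 : Set (Set ℕ)) : Set (ℕ → ℕ) := {x | Bx x ∉ 𝓑}

/-- `B^F_i = {F(2n)(i) + F(2n+1)(i) : n < ω, F(2n)(i) > 0}` for a play `F` of `G^ω`. -/
def BF (F : ℕ → ℕ → ℕ) (i : ℕ) : Set ℕ :=
  {m | ∃ n : ℕ, 0 < F (2 * n) i ∧ m = F (2 * n) i + F (2 * n + 1) i}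

/-- `D(A,B)` : `A` or `B` is finite, or for each `k` there are `a₁ < a₂ < a₃` in `A \ k`
with no element of `B` strictly between `a₁` and `a₃`. -/
def DRel (A B : Set ℕ) : Prop :=
  A.Finite ∨ B.Finite ∨ ∀ k : ℕ, ∃ a₁ a₂ a₃ : ℕ,
    a₁ ∈ A ∧ a₂ ∈ A ∧ a₃ ∈ A ∧ k ≤ a₁ ∧ a₁ < a₂ ∧ a₂ < a₃ ∧
    ¬ ∃ b ∈ B, a₁ < b ∧ b < a₃

/-!
The complement of `A` is a bad set `B` built by a recursion of length `𝔠` which defeats, one at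
a time, every strategy of either player on finitely many boards. A strategy of ONE on `n < κ`
boards is defeated by letting TWO play one fresh sequence on all boards and declaring the `n`
resulting plays bad; a strategy of TWO is defeated by letting ONE play a fresh sequence and
protecting TWO's half of the resulting play on board `0` from ever becoming bad. Before each
stage fewer than `𝔠` sequences have been used, so fresh sequences exist.

On `ω` boards ONE plays in inning `n`, on board `ξ`, a code of `ξ` and of TWO's first `n` moves
on the first `n` boards. Then any single board of such a play reveals TWO's moves on every
board, and freshness forces all bad boards of the play to have been declared bad at one and the
same stage, which declared fewer than `κ` plays bad.
-/

open Function

section Plays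

variable {M : Type*}

def playOfOne (σ : List M → M) (t : ℕ → M) : ℕ → M :=
  Stream'.interleave (fun n => σ (List.ofFn fun i : Fin n => t i)) t

def playOfTwo (τ : List M → M) (u : ℕ → M) : ℕ → M :=
  Stream'.interleave u (fun n => τ (List.ofFn fun i : Fin (n + 1) => u i))

lemma playOfOne_even (σ : List M → M) (t : ℕ → M) (n : ℕ) :
    playOfOne σ t (2 * n) = σ (List.ofFn fun i : Fin n => t i) :=
  Stream'.get_interleave_left n _ _

lemma playOfOne_odd (σ : List M → M) (t : ℕ → M) (n : ℕ) :
    playOfOne σ t (2 * n + 1) = t n :=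
  Stream'.get_interleave_right n _ _

lemma playOfTwo_even (τ : List M → M) (u : ℕ → M) (n : ℕ) : playOfTwo τ u (2 * n) = u n :=
  Stream'.get_interleave_left n _ _

lemma playOfTwo_odd (τ : List M → M) (u : ℕ → M) (n : ℕ) :
    playOfTwo τ u (2 * n + 1) = τ (List.ofFn fun i : Fin (n + 1) => u i) :=
  Stream'.get_interleave_right n _ _

lemma oneFollows_playOfOne (σ : List M → M) (t : ℕ → M) :
    OneFollows σ (playOfOne σ t) := by
  intro n
  simp only [playOfOne_even, playOfOne_odd]

lemma twoFollows_playOfTwo (τ : List M → M) (u : ℕ → M) :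
    TwoFollows τ (playOfTwo τ u) := by
  intro n
  simp only [playOfTwo_even, playOfTwo_odd]

end Plays

/-- ONE plays on the boards `K` by simulating `σ` on the boards `I`, pretending that TWO plays
`default` on the boards outside the range of `e`. -/
theorem oneWinsGSBoards_of_injective {Λ : Type*} [Inhabited Λ] {I K : Type u}
    {A : Set (ℕ → Λ)} (σ : List (I → Λ) → I → Λ) {e : K → I} (he : Injective e)
    (hσ : ∀ q, OneFollows σ q → #{ξ : I | (fun n => q n ξ) ∉ A} < #K) :
    OneWinsGSBoards Λ K A := by
  let r : (K → Λ) → I → Λ := fun f => extend e f default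
  refine ⟨fun L k => σ (L.map r) (e k), fun q hq => ?_⟩
  set q' := playOfOne σ fun n => r (q (2 * n + 1)) with hq'
  have hcol : ∀ m k, q m k = q' m (e k) := by
    intro m k
    obtain ⟨n, rfl | rfl⟩ := Nat.even_or_odd' m
    · rw [hq n, hq', playOfOne_even]
      exact congrArg (σ · (e k)) List.map_ofFn
    · rw [hq', playOfOne_odd]
      exact (he.extend_apply _ _ k).symm
  by_contra! hbad
  have hinj : Injective fun k : K => (⟨e k, by simpa [hcol] using hbad k⟩ :
      {ξ : I | (fun n => q' n ξ) ∉ A}) :=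
    fun a b hab => he (congrArg Subtype.val hab)
  exact (mk_le_of_injective hinj).not_gt (hσ q' (oneFollows_playOfOne σ _))

section Cardinality

lemma mk_iUnion_lt_continuum {α ι : Type u} (hι : #ι < 𝔠) {S : ι → Set α}
    (hS : ∀ i, (S i).Countable) : #(⋃ i, S i) < 𝔠 :=
  (mk_iUnion_le S).trans_lt <| mul_lt_of_lt aleph0_le_continuum hι <|
    (ciSup_le' fun i => le_aleph0_iff_set_countable.mpr (hS i)).trans_lt aleph0_lt_continuum

lemma mk_arrow_le_continuum (α β : Type) [Countable α] [Countable β] :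
    #(α → β) ≤ 𝔠 := by
  rw [← power_def, ← aleph0_power_aleph0]
  exact (power_le_power_right mk_le_aleph0).trans
    (power_le_power_left aleph0_ne_zero mk_le_aleph0)

noncomputable def avoid {α : Type*} [Nonempty α] (F : Set α) : α := Classical.epsilon (· ∉ F)

lemma avoid_notMem {α : Type u} [Nonempty α] {F : Set α} (hF : #F < #α) : avoid F ∉ F := by
  refine Classical.epsilon_spec (p := (· ∉ F)) ?_
  by_contra! hall
  rw [eq_univ_of_forall hall, mk_univ] at hF
  exact hF.false

lemma avoid_notMem_of_mk_lt_continuum {F : Set (ℕ → ℕ)} (hF : #F < 𝔠) : avoid F ∉ F :=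
  avoid_notMem (by rwa [← power_def, mk_nat, aleph0_power_aleph0])

end Cardinality

section Coding

def encodeCorner (n : ℕ) (o : ℕ → ℕ → ℕ) : ℕ :=
  Encodable.encode fun k j : Fin n => o k j

lemma encodeCorner_congr {n : ℕ} {o o' : ℕ → ℕ → ℕ}
    (h : ∀ k j, k < n → j < n → o k j = o' k j) : encodeCorner n o = encodeCorner n o' :=
  congrArg Encodable.encode (funext₂ fun k j => h k j k.isLt j.isLt)

lemma eq_of_encodeCorner_eq {n : ℕ} {o o' : ℕ → ℕ → ℕ}
    (h : encodeCorner n o = encodeCorner n o') {k j : ℕ} (hk : k < n) (hj : j < n) :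
    o k j = o' k j :=
  congrFun₂ (Encodable.encode_injective h) ⟨k, hk⟩ ⟨j, hj⟩

def codingStrategy (L : List (ℕ → ℕ)) (ξ : ℕ) : ℕ :=
  Nat.pair ξ (encodeCorner L.length fun k j => L.getD k 0 j)

def IsCodedColumn (x : ℕ → ℕ) (ξ : ℕ) (o : ℕ → ℕ → ℕ) : Prop :=
  (∀ n, x (2 * n) = Nat.pair ξ (encodeCorner n o)) ∧ ∀ n, x (2 * n + 1) = o n ξ

lemma isCodedColumn_of_oneFollows {q : ℕ → ℕ → ℕ} (hq : OneFollows codingStrategy q)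
    (ξ : ℕ) : IsCodedColumn (fun m => q m ξ) ξ fun k j => q (2 * k + 1) j := by
  refine ⟨fun n => ?_, fun n => rfl⟩
  dsimp only
  rw [congrFun (hq n) ξ, codingStrategy, List.length_ofFn]
  congr 1
  refine encodeCorner_congr fun k j hk _ => ?_
  simp [hk]

lemma IsCodedColumn.unique {x : ℕ → ℕ} {ξ ξ' : ℕ} {o o' : ℕ → ℕ → ℕ}
    (h : IsCodedColumn x ξ o) (h' : IsCodedColumn x ξ' o') : ξ = ξ' ∧ o = o' := by
  have hpair : ∀ n, Nat.pair ξ (encodeCorner n o) = Nat.pair ξ' (encodeCorner n o') :=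
    fun n => (h.1 n).symm.trans (h'.1 n)
  refine ⟨(Nat.pair_eq_pair.mp (hpair 0)).1, funext₂ fun k j => ?_⟩
  exact eq_of_encodeCorner_eq (Nat.pair_eq_pair.mp (hpair (max k j + 1))).2
    (by omega) (by omega)

noncomputable def decodeArray (x : ℕ → ℕ) : ℕ → ℕ → ℕ :=
  (Classical.epsilon fun p : ℕ × (ℕ → ℕ → ℕ) => IsCodedColumn x p.1 p.2).2

lemma IsCodedColumn.decodeArray_eq {x : ℕ → ℕ} {ξ : ℕ} {o : ℕ → ℕ → ℕ}
    (h : IsCodedColumn x ξ o) : decodeArray x = o :=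
  ((Classical.epsilon_spec (p := fun p : ℕ × (ℕ → ℕ → ℕ) => IsCodedColumn x p.1 p.2)
    ⟨(ξ, o), h⟩).unique h).2

end Coding

section Construction

abbrev Strategy (n : ℕ) : Type := List (Fin n → ℕ) → Fin n → ℕ

/-- `inl` holds the strategies of ONE, `inr` those of TWO. -/
def Task : Type := (Σ n, Strategy n) ⊕ (Σ n, Strategy n)

lemma mk_task_le : #Task ≤ 𝔠 := by
  have hstrat : #(Σ n, Strategy n) ≤ 𝔠 :=
    calc #(Σ n, Strategy n) ≤ sum fun _ : ℕ => 𝔠 :=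
          (mk_sigma _).trans_le (sum_le_sum _ _ fun n => mk_arrow_le_continuum _ _)
      _ = 𝔠 := by rw [sum_const', mk_nat, aleph0_mul_continuum]
  calc #Task ≤ 𝔠 + 𝔠 := by
        rw [Task, mk_sum, lift_id]
        exact add_le_add hstrat hstrat
    _ = 𝔠 := continuum_add_self

abbrev Stage : Type := (ord 𝔠).ToType

lemma mk_Iio_stage_lt (w : Stage) : #(Iio w) < 𝔠 := by
  simpa using mk_Iio_lt w

lemma exists_surjective_stage_task : ∃ f : Stage → Task, Surjective f := by
  have : Nonempty Task := ⟨.inl ⟨0, fun _ => finZeroElim⟩⟩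
  obtain ⟨e⟩ : Nonempty (Task ↪ Stage) := by
    simpa [← le_def] using mk_task_le
  exact ⟨invFun e, invFun_surjective e.injective⟩

noncomputable def taskAt : Stage → Task := exists_surjective_stage_task.choose

lemma taskAt_surjective : Surjective taskAt := exists_surjective_stage_task.choose_spec

def forbiddenOdd (A P : Set (ℕ → ℕ)) : Set (ℕ → ℕ) :=
  (⋃ x : A, range fun j k => decodeArray x k j) ∪ P

def evenParts (A : Set (ℕ → ℕ)) : Set (ℕ → ℕ) := (fun x k => x (2 * k)) '' A

/-- `A` holds the plays made bad and `P` the TWO-halves protected at earlier stages; the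
output is the pair of the plays made bad and of the TWO-halves protected at this stage. -/
noncomputable def step (κ : Cardinal) (A P : Set (ℕ → ℕ)) :
    Task → Set (ℕ → ℕ) × Set (ℕ → ℕ)
  | .inl ⟨n, σ⟩ =>
      if (n : Cardinal) < κ then
        (range fun i m => playOfOne σ (fun k _ => avoid (forbiddenOdd A P) k) m i, ∅)
      else (∅, ∅)
  | .inr ⟨n, τ⟩ =>
      if h : 0 < n then
        (∅, {fun k => playOfTwo τ (fun k _ => avoid (evenParts A) k) (2 * k + 1) ⟨0, h⟩})
      else (∅, ∅)

noncomputable def stages (κ : Cardinal) : Stage → Set (ℕ → ℕ) × Set (ℕ → ℕ) :=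
  wellFounded_lt.fix fun w ih =>
    step κ (⋃ v : Iio w, (ih v v.2).1) (⋃ v : Iio w, (ih v v.2).2) (taskAt w)

def addedAt (κ : Cardinal) (w : Stage) : Set (ℕ → ℕ) := (stages κ w).1

def protectedAt (κ : Cardinal) (w : Stage) : Set (ℕ → ℕ) := (stages κ w).2

def addedBefore (κ : Cardinal) (w : Stage) : Set (ℕ → ℕ) := ⋃ v : Iio w, addedAt κ v

def protectedBefore (κ : Cardinal) (w : Stage) : Set (ℕ → ℕ) :=
  ⋃ v : Iio w, protectedAt κ v

def badSet (κ : Cardinal) : Set (ℕ → ℕ) := ⋃ w, addedAt κ w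

noncomputable def freshOdd (κ : Cardinal) (w : Stage) : ℕ → ℕ :=
  avoid (forbiddenOdd (addedBefore κ w) (protectedBefore κ w))

variable {κ : Cardinal}

lemma stages_eq (w : Stage) :
    stages κ w = step κ (addedBefore κ w) (protectedBefore κ w) (taskAt w) := by
  rw [stages, WellFounded.fix_eq]
  rfl

lemma stages_of_taskAt_inl {w : Stage} {n : ℕ} {σ : Strategy n}
    (hw : taskAt w = .inl ⟨n, σ⟩) (hn : (n : Cardinal) < κ) :
    stages κ w = (range fun i m => playOfOne σ (fun k _ => freshOdd κ w k) m i, ∅) := by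
  rw [stages_eq, hw, step, if_pos hn]
  rfl

lemma stages_of_taskAt_inr {w : Stage} {n : ℕ} {τ : Strategy n}
    (hw : taskAt w = .inr ⟨n, τ⟩) (hn : 0 < n) :
    stages κ w = (∅, {fun k => playOfTwo τ (fun k _ => avoid (evenParts (addedBefore κ w)) k)
      (2 * k + 1) ⟨0, hn⟩}) := by
  rw [stages_eq, hw, step, dif_pos hn]

lemma addedAt_countable (w : Stage) : (addedAt κ w).Countable := by
  rw [addedAt, stages_eq]
  rcases taskAt w with ⟨n, σ⟩ | ⟨n, τ⟩ <;> simp only [step] <;> split_ifs <;>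
    simp [countable_range]

lemma protectedAt_countable (w : Stage) : (protectedAt κ w).Countable := by
  rw [protectedAt, stages_eq]
  rcases taskAt w with ⟨n, σ⟩ | ⟨n, τ⟩ <;> simp only [step] <;> split_ifs <;> simp

lemma mk_addedAt_lt (h0 : 0 < κ) (w : Stage) : #(addedAt κ w) < κ := by
  rw [addedAt, stages_eq]
  rcases taskAt w with ⟨n, σ⟩ | ⟨n, τ⟩ <;> simp only [step] <;> split_ifs with hn
  · exact mk_range_le.trans_lt (by simpa using hn)
  all_goals simpa using h0

lemma mk_addedBefore_lt (w : Stage) : #(addedBefore κ w) < 𝔠 :=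
  mk_iUnion_lt_continuum (mk_Iio_stage_lt w) fun v => addedAt_countable v

lemma mk_protectedBefore_lt (w : Stage) : #(protectedBefore κ w) < 𝔠 :=
  mk_iUnion_lt_continuum (mk_Iio_stage_lt w) fun v => protectedAt_countable v

lemma mk_forbiddenOdd_lt {A P : Set (ℕ → ℕ)} (hA : #A < 𝔠) (hP : #P < 𝔠) :
    #(forbiddenOdd A P) < 𝔠 :=
  (mk_union_le _ _).trans_lt <| add_lt_of_lt aleph0_le_continuum
    (mk_iUnion_lt_continuum hA fun _ => countable_range _) hP

lemma mk_evenParts_lt {A : Set (ℕ → ℕ)} (hA : #A < 𝔠) : #(evenParts A) < 𝔠 :=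
  mk_image_le.trans_lt hA

lemma oddPart_eq_freshOdd {w : Stage} {x : ℕ → ℕ} (hx : x ∈ addedAt κ w) :
    (fun k => x (2 * k + 1)) = freshOdd κ w := by
  revert hx
  rw [addedAt, stages_eq]
  rcases taskAt w with ⟨n, σ⟩ | ⟨n, τ⟩ <;> simp only [step] <;> split_ifs <;> intro hx
  · obtain ⟨i, rfl⟩ := hx
    funext k
    exact congrFun (playOfOne_odd σ _ k) i
  all_goals simp at hx

lemma oddPart_notMem_forbiddenOdd {w : Stage} {x : ℕ → ℕ} (hx : x ∈ addedAt κ w) :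
    (fun k => x (2 * k + 1)) ∉ forbiddenOdd (addedBefore κ w) (protectedBefore κ w) := by
  rw [oddPart_eq_freshOdd hx]
  exact avoid_notMem_of_mk_lt_continuum
    (mk_forbiddenOdd_lt (mk_addedBefore_lt w) (mk_protectedBefore_lt w))

theorem exists_oneFollows_forall_mem_badSet {n : ℕ} (σ : Strategy n)
    (hn : (n : Cardinal) < κ) :
    ∃ q, OneFollows σ q ∧ ∀ i, (fun m => q m i) ∈ badSet κ := by
  obtain ⟨w, hw⟩ := taskAt_surjective (.inl ⟨n, σ⟩)
  refine ⟨_, oneFollows_playOfOne σ fun k _ => freshOdd κ w k,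
    fun i => mem_iUnion.2 ⟨w, ?_⟩⟩
  rw [addedAt, stages_of_taskAt_inl hw hn]
  exact ⟨i, rfl⟩

theorem exists_twoFollows_notMem_badSet {n : ℕ} (τ : Strategy n) (hn : 0 < n) :
    ∃ q, TwoFollows τ q ∧ (fun m => q m ⟨0, hn⟩) ∉ badSet κ := by
  obtain ⟨w, hw⟩ := taskAt_surjective (.inr ⟨n, τ⟩)
  set u := avoid (evenParts (addedBefore κ w))
  refine ⟨_, twoFollows_playOfTwo τ fun k _ => u k, fun hbad => ?_⟩
  obtain ⟨v, hv⟩ := mem_iUnion.1 hbad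
  rcases lt_trichotomy v w with hvw | rfl | hwv
  · refine avoid_notMem_of_mk_lt_continuum (mk_evenParts_lt (mk_addedBefore_lt w))
      ⟨_, mem_iUnion.2 ⟨⟨v, hvw⟩, hv⟩, ?_⟩
    funext k
    exact congrFun (playOfTwo_even τ _ k) _
  · rw [addedAt, stages_of_taskAt_inr hw hn] at hv
    exact hv
  · refine oddPart_notMem_forbiddenOdd hv (Or.inr (mem_iUnion.2 ⟨⟨w, hwv⟩, ?_⟩))
    rw [protectedAt, stages_of_taskAt_inr hw hn]
    rfl

/-- A play made bad at stage `v` codes TWO's moves on every board, so these moves are forbidden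
as TWO's half of any play made bad at a later stage. -/
lemma stage_eq_of_mem_addedAt {q : ℕ → ℕ → ℕ} (hq : OneFollows codingStrategy q)
    {ξ ξ' : ℕ} {v w : Stage} (hv : (fun m => q m ξ) ∈ addedAt κ v)
    (hw : (fun m => q m ξ') ∈ addedAt κ w) : v = w := by
  suffices key : ∀ {ξ ξ' : ℕ} {v w : Stage}, (fun m => q m ξ) ∈ addedAt κ v →
      (fun m => q m ξ') ∈ addedAt κ w → ¬ v < w from
    le_antisymm (not_lt.1 (key hw hv)) (not_lt.1 (key hv hw))
  intro ξ ξ' v w hv hw hvw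
  refine oddPart_notMem_forbiddenOdd hw
    (Or.inl (mem_iUnion.2 ⟨⟨_, mem_iUnion.2 ⟨⟨v, hvw⟩, hv⟩⟩, ξ', ?_⟩))
  rw [(isCodedColumn_of_oneFollows hq ξ).decodeArray_eq]

theorem mk_badSet_columns_lt (h0 : 0 < κ) {q : ℕ → ℕ → ℕ}
    (hq : OneFollows codingStrategy q) : #{ξ : ℕ | (fun m => q m ξ) ∈ badSet κ} < κ := by
  obtain hnone | ⟨ξ₀, hξ₀⟩ :=
    eq_empty_or_nonempty {ξ : ℕ | (fun m => q m ξ) ∈ badSet κ}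
  · simpa [hnone] using h0
  obtain ⟨w₀, hw₀⟩ := mem_iUnion.1 hξ₀
  let f : {ξ : ℕ | (fun m => q m ξ) ∈ badSet κ} → addedAt κ w₀ := fun ξ =>
    ⟨fun m => q m ξ, by
      obtain ⟨w, hw⟩ := mem_iUnion.1 ξ.2
      rwa [← stage_eq_of_mem_addedAt hq hw hw₀]⟩
  have hf : Injective f := fun ξ ξ' h => by
    have hcol : (fun m => q m ξ) = fun m => q m ξ' := congrArg Subtype.val h
    exact Subtype.ext ((isCodedColumn_of_oneFollows hq ξ).unique
      (hcol ▸ isCodedColumn_of_oneFollows hq ξ')).1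
  exact (mk_le_of_injective hf).trans_lt (mk_addedAt_lt h0 w₀)

end Construction

/-- Theorem (paper Thm 29(2)): for `0 < κ ≤ ℵ₀` there is `A ⊆ ωω` such that
`GS_ω(A, n)` is undetermined for `0 < n < κ`, while ONE has a strategy in
`GS_ω(A, ℵ₀)` ensuring TWO wins on fewer than `κ` boards (hence ONE has a winning
strategy in `GS_ω(A, κ)`). -/
theorem statement_14 (κ : Cardinal.{0}) (h0 : 0 < κ) (hκ : κ ≤ ℵ₀) :
    ∃ A : Set (ℕ → ℕ),
      (∀ n : ℕ, 0 < n → (n : Cardinal) < κ → ¬ GSBoardsDetermined ℕ (Fin n) A) ∧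
      (∃ σ : List (ℕ → ℕ) → ℕ → ℕ, ∀ q : ℕ → ℕ → ℕ, OneFollows σ q →
        #{ξ : ℕ | (fun n => q n ξ) ∉ A} < κ) ∧
      ∀ K : Type, #K = κ → OneWinsGSBoards ℕ K A := by
  have hbound : ∀ q, OneFollows codingStrategy q →
      #{ξ : ℕ | (fun n => q n ξ) ∉ (badSet κ)ᶜ} < κ := fun q hq => by
    simpa only [mem_compl_iff, not_not] using mk_badSet_columns_lt h0 hq
  refine ⟨(badSet κ)ᶜ, ?_, ⟨codingStrategy, hbound⟩, fun K hK => ?_⟩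
  · rintro n hn hnκ (⟨σ, hσ⟩ | ⟨τ, hτ⟩)
    · obtain ⟨q, hq, hbad⟩ := exists_oneFollows_forall_mem_badSet σ hnκ
      obtain ⟨ξ, hξ⟩ := hσ q hq
      exact hξ (hbad ξ)
    · obtain ⟨q, hq, hgood⟩ := exists_twoFollows_notMem_badSet (κ := κ) τ hn
      exact hτ q hq ⟨0, hn⟩ hgood
  · have : Countable K := mk_le_aleph0_iff.mp (hK ▸ hκ)
    obtain ⟨e, he⟩ := Countable.exists_injective_nat K
    exact oneWinsGSBoards_of_injective codingStrategy he (hK ▸ hbound)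
end GamePaper
end

section
/- Suppose 0 < κ ≤ ω and 𝓑 ⊆ P(ω) is such that for every sequence (B_i : i < κ) of elements of 𝓑 there are i < j < κ for which I(B_i,B_j) fails. Then there is a strategy σ for ONE in the κ-board game GS_ω(Y(𝓑),κ) which ensures that TWO wins on fewer than κ boards: in every play (f_n : n < ω) in which ONE follows σ, the set of ξ < κ with (f_n(ξ) : n < ω) ∉ Y(𝓑) has cardinality less than κ. -/
open Cardinal Set

namespace GamePaper

universe u

/-! ONE fixes an injection of the boards into `ω` and in round `n` plays only on board
`(Nat.unpair n).1`, a number larger than every sum `x(2m) + x(2m+1)` produced so far (`ladder`).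
Each round then adds exactly one element to exactly one `B(x)`, and these elements increase with
the round. As `Nat.pair i s = s * s + i` for `i < s`, every shell `s > max i j` of the pairing
contains exactly one round of board `i` and one of board `j`, so any two of the sets `B(x)` are
interlaced, and by hypothesis fewer than `κ` of them lie in `𝓑`. -/

open Function

lemma nth_eq_of_strictMono {p : ℕ → Prop} {g : ℕ → ℕ} (hg : StrictMono g)
    (hp : ∀ m, p m ↔ m ∈ range g) : Nat.nth p = g := by
  have hinf : (Set.ofPred p).Infinite := by
    have : Set.ofPred p = range g := Set.ext hp
    rw [this]
    exact Set.infinite_range_of_injective hg.injective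
  funext n
  refine (Nat.eq_nth_of_strictMonoOn_of_mapsTo_of_surjOn g ?_ ?_ (hg.strictMonoOn _)
    (fun hf => (hinf hf).elim)).symm
  · rintro m hm
    obtain ⟨t, rfl⟩ := (hp m).1 hm
    exact ⟨t, fun hf => (hinf hf).elim, rfl⟩
  · exact fun t _ => (hp (g t)).2 ⟨t, rfl⟩

section Interlaced

variable {A B : Set ℕ} {a b : ℕ → ℕ} {k : ℕ}

lemma interlaced_of_alternating (hab : ∀ t, a t < b t) (hba : ∀ t, b t < a (t + 1))
    (hA : ∀ m ≥ k, m ∈ A ↔ m ∈ range a) (hB : ∀ m ≥ k, m ∈ B ↔ m ∈ range b) :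
    Interlaced A B := by
  have ha : StrictMono a := strictMono_nat_of_lt_succ fun t => (hab t).trans (hba t)
  have hk : k ≤ a k := ha.id_le k
  have hA' : ∀ m, (m ∈ A ∧ a k ≤ m) ↔ m ∈ range fun t => a (t + k) := by
    refine fun m => ⟨fun ⟨hm, hkm⟩ => ?_, ?_⟩
    · obtain ⟨s, rfl⟩ := (hA _ (hk.trans hkm)).1 hm
      exact ⟨s - k, congrArg a (Nat.sub_add_cancel (ha.le_iff_le.1 hkm))⟩
    · rintro ⟨t, rfl⟩
      have hle : a k ≤ a (t + k) := ha.monotone (by omega)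
      exact ⟨(hA _ (hk.trans hle)).2 ⟨_, rfl⟩, hle⟩
  have hB' : ∀ m, (m ∈ B ∧ a k ≤ m) ↔ m ∈ range fun t => b (t + k) := by
    refine fun m => ⟨fun ⟨hm, hkm⟩ => ?_, ?_⟩
    · obtain ⟨s, rfl⟩ := (hB _ (hk.trans hkm)).1 hm
      have hks : k ≤ s := by
        by_contra! hs
        exact (hkm.trans_lt ((hba s).trans_le (ha.monotone hs))).false
      exact ⟨s - k, congrArg b (Nat.sub_add_cancel hks)⟩
    · rintro ⟨t, rfl⟩
      have hle : a k ≤ b (t + k) := (ha.monotone (by omega)).trans (hab _).le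
      exact ⟨(hB _ (hk.trans hle)).2 ⟨_, rfl⟩, hle⟩
  have hb : StrictMono b := strictMono_nat_of_lt_succ fun t => (hba t).trans (hab (t + 1))
  have hak : StrictMono fun t => a (t + k) := ha.comp (strictMono_id.add_const k)
  have hbk : StrictMono fun t => b (t + k) := hb.comp (strictMono_id.add_const k)
  refine ⟨Set.infinite_of_injective_forall_mem hak.injective fun t => ((hA' _).2 ⟨t, rfl⟩).1,
    Set.infinite_of_injective_forall_mem hbk.injective fun t => ((hB' _).2 ⟨t, rfl⟩).1,
    a k, fun n => ?_⟩
  rw [nth_eq_of_strictMono hak hA', nth_eq_of_strictMono hbk hB']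
  exact ⟨hab _, by simpa only [add_right_comm] using hba (n + k)⟩

lemma interlaced_of_alternating' (hab : ∀ t, a t < b t) (hba : ∀ t, b t < a (t + 1))
    (hA : ∀ m ≥ k, m ∈ A ↔ m ∈ range a) (hB : ∀ m ≥ k, m ∈ B ↔ m ∈ range b) :
    Interlaced B A := by
  refine interlaced_of_alternating (k := k + a 0 + 1) hba (fun t => hab (t + 1))
    (fun m hm => hB m (by omega)) fun m hm => (hA m (by omega)).trans ⟨?_, ?_⟩
  · rintro ⟨_ | t, rfl⟩
    · omega
    · exact ⟨t, rfl⟩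
  · rintro ⟨t, rfl⟩
    exact ⟨t + 1, rfl⟩

end Interlaced

section Rounds

lemma unpair_fst_eq_iff {i c n : ℕ} (hic : i < c) (hn : c * c ≤ n) :
    (Nat.unpair n).1 = i ↔ ∃ t, (c + t) * (c + t) + i = n := by
  constructor
  · intro h
    have hpair := Nat.pair_unpair n
    rw [h] at hpair
    unfold Nat.pair at hpair
    split_ifs at hpair with hiy
    · have hcy : c ≤ (Nat.unpair n).2 := by
        by_contra! hy
        nlinarith [Nat.mul_le_mul hy hy]
      exact ⟨(Nat.unpair n).2 - c, by rw [Nat.add_sub_cancel' hcy, hpair]⟩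
    · nlinarith [Nat.mul_le_mul hic hic]
  · rintro ⟨t, rfl⟩
    have hpair : Nat.pair i (c + t) = (c + t) * (c + t) + i := by
      simp [Nat.pair, show i < c + t by omega]
    rw [← hpair, Nat.unpair_pair]

variable {E : ℕ → ℕ}

lemma mem_image_unpair_fst_iff (hE : StrictMono E) {i c m : ℕ} (hic : i < c)
    (hm : E (c * c) ≤ m) :
    m ∈ E '' {n | (Nat.unpair n).1 = i} ↔ m ∈ range fun t => E ((c + t) * (c + t) + i) := by
  constructor
  · rintro ⟨n, hn, rfl⟩
    obtain ⟨t, rfl⟩ := (unpair_fst_eq_iff hic (hE.le_iff_le.1 hm)).1 hn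
    exact ⟨t, rfl⟩
  · rintro ⟨t, rfl⟩
    have hle : c * c ≤ (c + t) * (c + t) + i := by nlinarith
    exact ⟨_, (unpair_fst_eq_iff hic hle).2 ⟨t, rfl⟩, rfl⟩

lemma interlaced_image_unpair_fst_of_lt (hE : StrictMono E) {i j : ℕ} (hij : i < j) :
    Interlaced (E '' {n | (Nat.unpair n).1 = i}) (E '' {n | (Nat.unpair n).1 = j}) ∧
      Interlaced (E '' {n | (Nat.unpair n).1 = j}) (E '' {n | (Nat.unpair n).1 = i}) := by
  have hab : ∀ t, E ((j + 1 + t) * (j + 1 + t) + i) < E ((j + 1 + t) * (j + 1 + t) + j) :=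
    fun t => hE (by omega)
  have hba : ∀ t,
      E ((j + 1 + t) * (j + 1 + t) + j) < E ((j + 1 + (t + 1)) * (j + 1 + (t + 1)) + i) :=
    fun t => hE (by nlinarith)
  have hA := fun m => mem_image_unpair_fst_iff hE (c := j + 1) (m := m) (by omega : i < j + 1)
  have hB := fun m => mem_image_unpair_fst_iff hE (c := j + 1) (m := m) (by omega : j < j + 1)
  exact ⟨interlaced_of_alternating hab hba hA hB, interlaced_of_alternating' hab hba hA hB⟩

lemma interlaced_image_unpair_fst (hE : StrictMono E) {i j : ℕ} (hij : i ≠ j) :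
    Interlaced (E '' {n | (Nat.unpair n).1 = i}) (E '' {n | (Nat.unpair n).1 = j}) := by
  rcases hij.lt_or_gt with h | h
  · exact (interlaced_image_unpair_fst_of_lt hE h).1
  · exact (interlaced_image_unpair_fst_of_lt hE h).2

end Rounds

section Strategy

def ladder (c : ℕ → ℕ) : ℕ → ℕ
  | 0 => 1
  | n + 1 => 2 * ladder c n + c n

lemma ladder_congr {c c' : ℕ → ℕ} {n : ℕ} (h : ∀ m < n, c m = c' m) :
    ladder c n = ladder c' n := by
  induction n with
  | zero => rfl
  | succ n ih =>
    simp only [ladder, ih fun m hm => h m (by omega), h n (by omega)]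

lemma one_le_ladder (c : ℕ → ℕ) (n : ℕ) : 1 ≤ ladder c n := by
  induction n with
  | zero => exact le_rfl
  | succ n ih => simp only [ladder]; omega

lemma strictMono_ladder_add (c : ℕ → ℕ) : StrictMono fun n => ladder c n + c n :=
  strictMono_nat_of_lt_succ fun n => by
    have := one_le_ladder c n
    simp only [ladder]
    omega

variable {K : Type*}

/-- `g n` is TWO's `n`-th move; the answer counted in round `n` is the one on the board active
in that round, and `0` if no board is. -/
noncomputable def activeAnswer (ord : K → ℕ) (g : ℕ → K → ℕ) (n : ℕ) : ℕ :=
  extend ord (g n) 0 (Nat.unpair n).1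

noncomputable def interlacingStrategy (ord : K → ℕ) (L : List (K → ℕ)) (ξ : K) : ℕ :=
  if (Nat.unpair L.length).1 = ord ξ then
    ladder (activeAnswer ord fun m => L.getD m 0) L.length
  else 0

variable {ord : K → ℕ} {q : ℕ → K → ℕ}

lemma interlacingStrategy_move (hq : OneFollows (interlacingStrategy ord) q) (n : ℕ) (ξ : K) :
    q (2 * n) ξ =
      if (Nat.unpair n).1 = ord ξ then ladder (activeAnswer ord fun m => q (2 * m + 1)) n
      else 0 := by
  rw [hq n, interlacingStrategy, List.length_ofFn,
    ladder_congr (c' := activeAnswer ord fun m => q (2 * m + 1)) fun m hm => ?_]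
  simp only [activeAnswer, List.getD_eq_getElem?_getD, List.length_ofFn, hm, getElem?_pos,
    List.getElem_ofFn, Option.getD_some]

lemma bx_interlacingStrategy (hord : Injective ord)
    (hq : OneFollows (interlacingStrategy ord) q) (ξ : K) :
    Bx (fun n => q n ξ) =
      (fun n => ladder (activeAnswer ord fun m => q (2 * m + 1)) n +
        activeAnswer ord (fun m => q (2 * m + 1)) n) '' {n | (Nat.unpair n).1 = ord ξ} := by
  ext m
  simp only [Bx, interlacingStrategy_move hq, Set.mem_image]
  constructor
  · rintro ⟨n, hpos, rfl⟩
    have hn : (Nat.unpair n).1 = ord ξ := by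
      by_contra hn
      simp [hn] at hpos
    refine ⟨n, hn, ?_⟩
    simp only [hn, ↓reduceIte, activeAnswer, hord.extend_apply]
  · rintro ⟨n, hn : (Nat.unpair n).1 = ord ξ, rfl⟩
    refine ⟨n, by rw [if_pos hn]; exact one_le_ladder _ n, ?_⟩
    simp only [hn, ↓reduceIte, activeAnswer, hord.extend_apply]

lemma interlaced_bx_interlacingStrategy (hord : Injective ord)
    (hq : OneFollows (interlacingStrategy ord) q) {ξ η : K} (hξη : ξ ≠ η) :
    Interlaced (Bx fun n => q n ξ) (Bx fun n => q n η) := by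
  rw [bx_interlacingStrategy hord hq, bx_interlacingStrategy hord hq]
  exact interlaced_image_unpair_fst (strictMono_ladder_add _) (hord.ne hξη)

end Strategy

theorem statement_16_general (K : Type) [Countable K] (𝓑 : Set (Set ℕ))
    (h : ∀ g : K → Set ℕ, (∀ i, g i ∈ 𝓑) →
      ∃ i j : K, i ≠ j ∧ ¬ Interlaced (g i) (g j)) :
    ∃ σ : List (K → ℕ) → K → ℕ, ∀ q : ℕ → K → ℕ, OneFollows σ q →
      #{ξ : K | (fun n => q n ξ) ∉ YFam 𝓑} < #K := by
  obtain ⟨ord, hord⟩ := Countable.exists_injective_nat K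
  refine ⟨interlacingStrategy ord, fun q hq => lt_of_not_ge fun hle => ?_⟩
  obtain ⟨e⟩ := hle
  obtain ⟨i, j, hij, hni⟩ := h (fun i => Bx fun n => q n (e i)) fun i => not_not.1 (e i).2
  exact hni <| interlaced_bx_interlacingStrategy hord hq <|
    Subtype.coe_injective.ne (e.injective.ne hij)

/-- Lemma (paper Lemma 31): if `0 < κ ≤ ω` and `𝓑 ⊆ P(ω)` is such that in any
`κ`-sequence from `𝓑` two terms fail to be interlaced, then ONE has a strategy in
`GS_ω(Y(𝓑), κ)` ensuring that TWO wins on fewer than `κ` boards. -/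
theorem statement_16 (K : Type) [Nonempty K] [Countable K] (𝓑 : Set (Set ℕ))
    (h : ∀ g : K → Set ℕ, (∀ i, g i ∈ 𝓑) →
      ∃ i j : K, i ≠ j ∧ ¬ Interlaced (g i) (g j)) :
    ∃ σ : List (K → ℕ) → K → ℕ, ∀ q : ℕ → K → ℕ, OneFollows σ q →
      #{ξ : K | (fun n => q n ξ) ∉ YFam 𝓑} < #K :=
  statement_16_general K 𝓑 h

end GamePaper
end
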